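/- Let u(x) = 2^{-2s} √π (Γ(s+1/2) Γ(1+s))^{-1} (1 - x²)^s on Ω = (-1,1), with s ∈ (0,1). Then for every ε > 0 and every p ∈ ℕ there exist constants C_ε, γ > 0 such that ‖r^{p - 1/2 - s + ε} u^{(p)}‖_{L²(-1,1)} ≤ C_ε γ^p p!, where r(x) = dist(x, {-1,1}) = 1 - |x|. -/

import Mathlib

open MeasureTheory

/-- Exact solution of `(-Δ)^s u = 1` on `(-1,1)` with zero exterior condition. -/
noncomputable def uExact (s : ℝ) (x : ℝ) : ℝ :=
  2 ^ (-2 * s) * Real.sqrt Real.pi / (Real.Gamma (s + 1 / 2) * Real.Gamma (1 + s)) *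
    (1 - x ^ 2) ^ s

/-!
Write `1 - x² = (1 - x)(1 + x)` and `r(x) = 1 - |x|`. The `k`-th derivative of `(1 ∓ x)^s` is
`(∓1)^k (s)ₖ (1 ∓ x)^(s-k)`, where the falling factorial satisfies `|(s)ₖ| ≤ k!` for `|s| ≤ 1`.
Since `r ≤ 1 ∓ x` and `1 - x² ≤ 2r`, every term of the Leibniz expansion of `u⁽ᵖ⁾` is bounded
by `p! · 2 r^(s-p)`, whence `|u⁽ᵖ⁾| ≲ (p+1)! r^(s-p)`. Against the weight `r^(2(p-1/2-s+ε))`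
the square of this bound leaves `r^(2ε-1)`, which is integrable and independent of `p`.
-/

open Set Real
open scoped Nat

theorem abs_descPochhammer_eval_le_factorial {s : ℝ} (hs : |s| ≤ 1) (k : ℕ) :
    |(descPochhammer ℝ k).eval s| ≤ k ! := by
  induction k with
  | zero => simp
  | succ k ih =>
    rw [descPochhammer_succ_eval, abs_mul, Nat.factorial_succ, Nat.cast_mul,
      mul_comm ((k + 1 : ℕ) : ℝ)]
    gcongr
    calc |s - k| ≤ |s| + |(k : ℝ)| := abs_sub _ _
      _ ≤ _ := by push_cast; rw [Nat.abs_cast]; linarith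

theorem iteratedDeriv_const_add_rpow (a s : ℝ) (k : ℕ) (x : ℝ) :
    iteratedDeriv k (fun y => (a + y) ^ s) x =
      (descPochhammer ℝ k).eval s * (a + x) ^ (s - k) := by
  rw [iteratedDeriv_comp_const_add k (· ^ s) a, iteratedDeriv_eq_iterate]
  exact iter_deriv_rpow_const s (a + x) k

theorem iteratedDeriv_const_sub_rpow (a s : ℝ) (k : ℕ) (x : ℝ) :
    iteratedDeriv k (fun y => (a - y) ^ s) x =
      (-1) ^ k * (descPochhammer ℝ k).eval s * (a - x) ^ (s - k) := by
  rw [iteratedDeriv_comp_const_sub k (· ^ s) a, iteratedDeriv_eq_iterate, mul_assoc]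
  exact congrArg _ (iter_deriv_rpow_const s (a - x) k)

theorem rpow_sub_natCast_mul_rpow_sub_natCast_le {a b t c s : ℝ} (ht : 0 < t) (hta : t ≤ a)
    (htb : t ≤ b) (hc : 1 ≤ c) (hab : a * b ≤ c * t) (hs : s ∈ Icc (0 : ℝ) 1) (i j : ℕ) :
    a ^ (s - i) * b ^ (s - j) ≤ c * t ^ (s - (i + j : ℕ)) := by
  have ha := ht.trans_le hta
  have hb := ht.trans_le htb
  rw [rpow_sub ha, rpow_sub hb, rpow_sub ht, div_mul_div_comm (a ^ s), ← mul_rpow ha.le hb.le,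
    rpow_natCast, rpow_natCast, rpow_natCast, pow_add, mul_div_assoc']
  have hpow : (a * b) ^ s ≤ c * t ^ s := calc
    (a * b) ^ s ≤ (c * t) ^ s := rpow_le_rpow (by positivity) hab hs.1
    _ = c ^ s * t ^ s := mul_rpow (by linarith) ht.le
    _ ≤ c * t ^ s := by
      gcongr
      simpa using rpow_le_rpow_of_exponent_le hc hs.2
  exact div_le_div₀ (by positivity) hpow (by positivity)
    (mul_le_mul (pow_le_pow_left₀ ht.le hta i) (pow_le_pow_left₀ ht.le htb j) (by positivity)
      (by positivity))

theorem abs_iteratedDeriv_one_sub_rpow_mul_iteratedDeriv_one_add_rpow_le {s : ℝ}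
    (hs : s ∈ Icc (0 : ℝ) 1) {x : ℝ} (hx : x ∈ Ioo (-1 : ℝ) 1) (i j : ℕ) :
    |iteratedDeriv i (fun y => (1 - y) ^ s) x * iteratedDeriv j (fun y => (1 + y) ^ s) x| ≤
      i ! * j ! * (2 * (1 - |x|) ^ (s - (i + j : ℕ))) := by
  have hx₁ : 0 < 1 - x := by linarith [hx.2]
  have hx₂ : 0 < 1 + x := by linarith [hx.1]
  have hs' : |s| ≤ 1 := abs_le.2 ⟨by linarith [hs.1], hs.2⟩
  rw [iteratedDeriv_const_sub_rpow, iteratedDeriv_const_add_rpow, abs_mul, abs_mul, abs_mul,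
    abs_mul, abs_pow, abs_neg, abs_one, one_pow, one_mul, abs_of_pos (rpow_pos_of_pos hx₁ _),
    abs_of_pos (rpow_pos_of_pos hx₂ _)]
  calc |(descPochhammer ℝ i).eval s| * (1 - x) ^ (s - i) *
        (|(descPochhammer ℝ j).eval s| * (1 + x) ^ (s - j))
      ≤ i ! * (1 - x) ^ (s - i) * (j ! * (1 + x) ^ (s - j)) := by
        gcongr <;> exact abs_descPochhammer_eval_le_factorial hs' _
    _ = i ! * j ! * ((1 - x) ^ (s - i) * (1 + x) ^ (s - j)) := by ring
    _ ≤ i ! * j ! * (2 * (1 - |x|) ^ (s - (i + j : ℕ))) := by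
        refine mul_le_mul_of_nonneg_left ?_ (by positivity)
        refine rpow_sub_natCast_mul_rpow_sub_natCast_le ?_ ?_ ?_ one_le_two ?_ hs i j
        · linarith [abs_lt.2 hx]
        · linarith [le_abs_self x]
        · linarith [neg_abs_le x]
        · nlinarith [sq_abs x, sq_nonneg (1 - |x|)]

theorem abs_iteratedDeriv_one_sub_sq_rpow_le {s : ℝ} (hs : s ∈ Icc (0 : ℝ) 1) (p : ℕ) {x : ℝ}
    (hx : x ∈ Ioo (-1 : ℝ) 1) :
    |iteratedDeriv p (fun y => (1 - y ^ 2) ^ s) x| ≤ 2 * (p + 1)! * (1 - |x|) ^ (s - p) := by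
  have hsplit : (fun y => (1 - y ^ 2) ^ s) =ᶠ[nhds x]
      (fun y => (1 - y) ^ s) * (fun y => (1 + y) ^ s) := by
    filter_upwards [Icc_mem_nhds hx.1 hx.2] with y hy
    rw [Pi.mul_apply, ← mul_rpow (by linarith [hy.2]) (by linarith [hy.1])]
    congr 1
    ring
  have hterm : ∀ i ∈ Finset.range (p + 1),
      |(p.choose i : ℝ) * iteratedDeriv i (fun y => (1 - y) ^ s) x *
        iteratedDeriv (p - i) (fun y => (1 + y) ^ s) x| ≤ p ! * (2 * (1 - |x|) ^ (s - p)) := by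
    intro i hi
    have hip : i ≤ p := Nat.lt_succ_iff.mp (Finset.mem_range.mp hi)
    have h := abs_iteratedDeriv_one_sub_rpow_mul_iteratedDeriv_one_add_rpow_le hs hx i (p - i)
    rw [Nat.add_sub_cancel' hip] at h
    calc _ = (p.choose i : ℝ) * |iteratedDeriv i (fun y => (1 - y) ^ s) x *
          iteratedDeriv (p - i) (fun y => (1 + y) ^ s) x| := by
          rw [mul_assoc, abs_mul, Nat.abs_cast]
      _ ≤ (p.choose i : ℝ) * (i ! * (p - i)! * (2 * (1 - |x|) ^ (s - p))) := by gcongr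
      _ = (p.choose i * i ! * (p - i)! : ℕ) * (2 * (1 - |x|) ^ (s - p)) := by
          push_cast
          ring
      _ = p ! * (2 * (1 - |x|) ^ (s - p)) := by rw [Nat.choose_mul_factorial_mul_factorial hip]
  have hcd₁ : ContDiffAt ℝ p (fun y => (1 - y) ^ s) x :=
    (contDiffAt_rpow_const_of_ne (by linarith [hx.2])).comp x (contDiffAt_const.sub contDiffAt_id)
  have hcd₂ : ContDiffAt ℝ p (fun y => (1 + y) ^ s) x :=
    (contDiffAt_rpow_const_of_ne (by linarith [hx.1])).comp x (contDiffAt_const.add contDiffAt_id)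
  rw [hsplit.iteratedDeriv_eq, iteratedDeriv_mul hcd₁ hcd₂]
  calc _ ≤ ∑ i ∈ Finset.range (p + 1), (p ! * (2 * (1 - |x|) ^ (s - p)) : ℝ) :=
        (Finset.abs_sum_le_sum_abs _ _).trans (Finset.sum_le_sum hterm)
    _ = 2 * (p + 1)! * (1 - |x|) ^ (s - p) := by
        rw [Finset.sum_const, Finset.card_range, nsmul_eq_mul, Nat.factorial_succ]
        push_cast
        ring

theorem integrableOn_one_sub_abs_rpow {b : ℝ} (hb : -1 < b) :
    IntegrableOn (fun x => (1 - |x|) ^ b) (Ioo (-1 : ℝ) 1) := by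
  have hrpow := intervalIntegral.intervalIntegrable_rpow' (a := 0) (b := 2) hb
  have h₁ : IntervalIntegrable (fun x => (x + 1) ^ b) volume (-1) 1 := by
    have := hrpow.comp_add_right 1; norm_num at this; exact this
  have h₂ : IntervalIntegrable (fun x => (1 - x) ^ b) volume (-1) 1 := by
    have := (hrpow.comp_sub_left 1).symm; norm_num at this; exact this
  have hsum := (h₁.add h₂).1.mono_set Ioo_subset_Ioc_self
  refine hsum.mono' (Measurable.aestronglyMeasurable (by fun_prop))
    ((ae_restrict_iff' measurableSet_Ioo).2 (.of_forall fun x hx => ?_))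
  have hpos : 0 ≤ (x + 1) ^ b := rpow_nonneg (by linarith [hx.1]) b
  have hneg : 0 ≤ (1 - x) ^ b := rpow_nonneg (by linarith [hx.2]) b
  rw [norm_of_nonneg (rpow_nonneg (by linarith [abs_lt.2 hx]) b)]
  rcases abs_cases x with ⟨hx', -⟩ | ⟨hx', -⟩ <;> rw [hx']
  · linarith
  · rw [sub_neg_eq_add, add_comm]; linarith

theorem setIntegral_weighted_sq_rpow_le {f : ℝ → ℝ} {B a w b : ℝ} (hb : -1 < b)
    (hwab : w + 2 * a = b) (hf : ∀ x ∈ Ioo (-1 : ℝ) 1, |f x| ≤ B * (1 - |x|) ^ a) :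
    (∫ x in Ioo (-1 : ℝ) 1, (1 - |x|) ^ w * f x ^ 2) ^ ((1 : ℝ) / 2) ≤
      B * (∫ x in Ioo (-1 : ℝ) 1, (1 - |x|) ^ b) ^ ((1 : ℝ) / 2) := by
  have hB : 0 ≤ B := by simpa using (abs_nonneg _).trans (hf 0 (by norm_num))
  have hpt : ∀ x ∈ Ioo (-1 : ℝ) 1, (1 - |x|) ^ w * f x ^ 2 ≤ B ^ 2 * (1 - |x|) ^ b := by
    intro x hx
    have hr : 0 < 1 - |x| := by linarith [abs_lt.2 hx]
    calc (1 - |x|) ^ w * f x ^ 2 = (1 - |x|) ^ w * |f x| ^ 2 := by rw [sq_abs]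
      _ ≤ (1 - |x|) ^ w * (B * (1 - |x|) ^ a) ^ 2 := by gcongr; exact hf x hx
      _ = B ^ 2 * (1 - |x|) ^ b := by
        rw [← hwab, rpow_add hr, mul_comm 2 a, rpow_mul hr.le, rpow_two]; ring
  have hint : ∫ x in Ioo (-1 : ℝ) 1, (1 - |x|) ^ w * f x ^ 2 ≤
      B ^ 2 * ∫ x in Ioo (-1 : ℝ) 1, (1 - |x|) ^ b := by
    rw [← integral_const_mul]
    refine integral_mono_of_nonneg ?_ ((integrableOn_one_sub_abs_rpow hb).const_mul _)
      ((ae_restrict_iff' measurableSet_Ioo).2 (.of_forall hpt))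
    refine (ae_restrict_iff' measurableSet_Ioo).2 (.of_forall fun x hx => ?_)
    have hr : 0 < 1 - |x| := by linarith [abs_lt.2 hx]
    positivity
  rw [← sqrt_eq_rpow, ← sqrt_eq_rpow, ← sqrt_sq hB, ← sqrt_mul (sq_nonneg B)]
  exact sqrt_le_sqrt hint

theorem abs_iteratedDeriv_uExact_le {s : ℝ} (hs : s ∈ Icc (0 : ℝ) 1) (p : ℕ) {x : ℝ}
    (hx : x ∈ Ioo (-1 : ℝ) 1) :
    |iteratedDeriv p (uExact s) x| ≤
      |2 ^ (-2 * s) * √π / (Gamma (s + 1 / 2) * Gamma (1 + s))| * (2 * (p + 1)!) *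
        (1 - |x|) ^ (s - p) := by
  unfold uExact
  rw [iteratedDeriv_const_mul_field, abs_mul, mul_assoc]
  exact mul_le_mul_of_nonneg_left (abs_iteratedDeriv_one_sub_sq_rpow_le hs p hx) (abs_nonneg _)

/-- Weighted analytic regularity of the exact solution: for every `ε > 0` there are
`C, γ > 0` with `‖r^{p-1/2-s+ε} u^{(p)}‖_{L²(-1,1)} ≤ C γ^p p!` for all `p`. -/
theorem exact_solution_weighted_analytic (s : ℝ) (hs : s ∈ Set.Ioo (0 : ℝ) 1)
    (ε : ℝ) (hε : 0 < ε) :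
    ∃ C > (0 : ℝ), ∃ γ > (0 : ℝ), ∀ p : ℕ,
      (∫ x in Set.Ioo (-1 : ℝ) 1,
          (1 - |x|) ^ (2 * ((p : ℝ) - 1 / 2 - s + ε)) * (iteratedDeriv p (uExact s) x) ^ 2)
            ^ ((1 : ℝ) / 2)
        ≤ C * γ ^ p * Nat.factorial p := by
  set K := |2 ^ (-2 * s) * √π / (Gamma (s + 1 / 2) * Gamma (1 + s))|
  set A := (∫ x in Ioo (-1 : ℝ) 1, (1 - |x|) ^ (2 * ε - 1)) ^ ((1 : ℝ) / 2)
  have hA : 0 ≤ A := rpow_nonneg (setIntegral_nonneg measurableSet_Ioo fun x hx =>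
    rpow_nonneg (by linarith [abs_lt.2 hx]) _) _
  refine ⟨2 * K * A + 1, by positivity, 2, two_pos, fun p => ?_⟩
  have hfact : ((p + 1)! : ℝ) ≤ 2 ^ p * p ! := by
    rw [Nat.factorial_succ, Nat.cast_mul]
    gcongr
    exact_mod_cast Nat.lt_two_pow_self
  calc _ ≤ K * (2 * (p + 1)!) * A :=
        setIntegral_weighted_sq_rpow_le (a := s - p) (by linarith) (by ring)
          fun x hx => abs_iteratedDeriv_uExact_le (Ioo_subset_Icc_self hs) p hx
    _ = 2 * K * A * (p + 1)! := by ring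
    _ ≤ (2 * K * A + 1) * (2 ^ p * p !) := by gcongr; linarith
    _ = _ := by ring
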